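/- No minimally non-perfectly divisible graph contains a simplicial vertex. That is, if G is not perfectly divisible and every proper induced subgraph of G is perfectly divisible, then no vertex of G has a neighbourhood that induces a clique. -/

import Mathlib

open SimpleGraph

/-- A graph is perfect if every induced subgraph has chromatic number equal to
its clique number. -/
def IsPerfect {W : Type*} (G : SimpleGraph W) : Prop :=
  ∀ s : Set W, (G.induce s).chromaticNumber = ((G.induce s).cliqueNum : ℕ∞)

/-- `(A, B)` is a good partition of the induced subgraph `G[s]`:
`A` and `B` partition `s`, `G[A]` is perfect and `ω(G[B]) < ω(G[s])`. -/
def GoodPartition {W : Type*} (G : SimpleGraph W) (s A B : Set W) : Prop :=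
  A ∪ B = s ∧ Disjoint A B ∧ IsPerfect (G.induce A) ∧
    (G.induce B).cliqueNum < (G.induce s).cliqueNum

/-- A graph is perfectly divisible if every induced subgraph with at least one
edge admits a good partition. -/
def PerfectlyDivisible {W : Type*} (G : SimpleGraph W) : Prop :=
  ∀ s : Set W, (G.induce s).edgeSet.Nonempty → ∃ A B : Set W, GoodPartition G s A B

/-- A graph is minimally non-perfectly divisible if it is not perfectly
divisible but every proper induced subgraph is. -/
def MNPD {W : Type*} (G : SimpleGraph W) : Prop :=
  ¬ PerfectlyDivisible G ∧ ∀ s : Set W, s ≠ Set.univ → PerfectlyDivisible (G.induce s)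

/-- `C` is a clique cutset of `G`: `C` is a clique and `G - C` is disconnected,
i.e. the remaining vertices split into two nonempty parts with no edges between them. -/
def IsCliqueCutset {W : Type*} (G : SimpleGraph W) (C : Set W) : Prop :=
  G.IsClique C ∧ ∃ V1 V2 : Set W, V1.Nonempty ∧ V2.Nonempty ∧ Disjoint V1 V2 ∧
    V1 ∪ V2 = Cᶜ ∧ ∀ x ∈ V1, ∀ y ∈ V2, ¬ G.Adj x y

/-!
If `x` is simplicial, a good partition `(A, B)` of `G - x` extends to the good partition
`(A ∪ {x}, B)` of `G`. Indeed `ω(G[B]) < ω(G - x) ≤ ω(G)`, and adding a simplicial vertex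
to a perfect graph keeps it perfect: colour `H - x` with `χ(H - x) = ω(H - x)` colours; the
neighbours of `x` form a clique, which together with `x` has at most `ω(H)` vertices, so
`max (ω(H - x)) (deg x + 1) ≤ ω(H)` colours suffice for `H`. Hence a graph all of whose proper
induced subgraphs are perfectly divisible, and which has a simplicial vertex, is itself
perfectly divisible.
-/

namespace SimpleGraph

variable {V W : Type*} {G : SimpleGraph V} {H : SimpleGraph W}

theorem IsNClique.map_embedding (f : G ↪g H) {n : ℕ} {s : Finset V} (hs : G.IsNClique n s) :
    H.IsNClique n (s.map f.toEmbedding) :=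
  hs.map.mono <| (map_le_iff_le_comap _ _ _).mpr fun _ _ hab => f.map_rel_iff.mpr hab

theorem cliqueNum_mono_of_embedding [Finite W] (f : G ↪g H) : G.cliqueNum ≤ H.cliqueNum := by
  obtain ⟨s, hs⟩ := G.exists_isNClique_cliqueNum
  simpa [(hs.map_embedding f).card_eq] using (hs.map_embedding f).isClique.card_le_cliqueNum

theorem cliqueNum_congr (f : G ≃g H) : G.cliqueNum = H.cliqueNum := by
  unfold cliqueNum
  congr 1
  ext n
  exact ⟨fun ⟨s, hs⟩ => ⟨_, hs.map_embedding f.toEmbedding⟩,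
    fun ⟨s, hs⟩ => ⟨_, hs.map_embedding f.symm.toEmbedding⟩⟩

theorem cliqueNum_of_isEmpty [IsEmpty V] : G.cliqueNum = 0 := by
  obtain ⟨s, hs⟩ := G.exists_isNClique_cliqueNum
  simpa [Subsingleton.elim s ∅] using hs.card_eq.symm

theorem one_le_cliqueNum [Finite V] [Nonempty V] : 1 ≤ G.cliqueNum := by
  simpa using IsClique.card_le_cliqueNum (G := G) (t := {Classical.arbitrary V}) (tc := by simp)

theorem chromaticNumber_bot_eq_cliqueNum [Finite V] :
    (⊥ : SimpleGraph V).chromaticNumber = (⊥ : SimpleGraph V).cliqueNum := by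
  refine le_antisymm ?_ (⊥ : SimpleGraph V).cliqueNum_le_chromaticNumber
  cases isEmpty_or_nonempty V
  · simp [chromaticNumber_eq_zero_of_isEmpty]
  · rw [chromaticNumber_bot]
    exact_mod_cast one_le_cliqueNum

noncomputable def induceInduceIso (G : SimpleGraph V) (s : Set V) (t : Set s) :
    (G.induce s).induce t ≃g G.induce (Subtype.val '' t) where
  toEquiv := Equiv.Set.image Subtype.val t Subtype.val_injective
  map_rel_iff' := Iff.rfl

theorem Colorable.of_induce_compl_singleton {x : V} [Fintype (G.neighborSet x)] {n : ℕ}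
    (hc : (G.induce {x}ᶜ).Colorable n) (hdeg : G.degree x < n) : G.Colorable n := by
  classical
  obtain ⟨c⟩ := hc
  have hN : ∀ v ∈ G.neighborSet x, v ∈ ({x}ᶜ : Set V) := fun _ hv => Adj.ne' hv
  obtain ⟨i, hi⟩ : ∃ i, ∀ v (hv : v ∈ G.neighborSet x), c ⟨v, hN v hv⟩ ≠ i := by
    by_contra! hall
    have hsurj : Function.Surjective fun v : G.neighborSet x => c ⟨v, hN v v.2⟩ := fun i =>
      let ⟨v, hv, hvi⟩ := hall i
      ⟨⟨v, hv⟩, hvi⟩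
    have := Fintype.card_le_of_surjective _ hsurj
    rw [Fintype.card_fin, card_neighborSet_eq_degree] at this
    omega
  refine ⟨Coloring.mk (fun v => if hv : v = x then i else c ⟨v, hv⟩) fun {v w} hvw => ?_⟩
  by_cases hv : v = x <;> by_cases hw : w = x
  · exact absurd (hv ▸ hw ▸ hvw) G.irrefl
  · subst hv
    simpa [hw] using (hi w hvw).symm
  · subst hw
    simpa [hv] using hi v hvw.symm
  · simpa [hv, hw] using c.valid (v := ⟨v, hv⟩) (w := ⟨w, hw⟩) hvw

theorem chromaticNumber_eq_cliqueNum_of_isClique_neighborSet [Finite V] {x : V}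
    (hx : G.IsClique (G.neighborSet x))
    (h : (G.induce {x}ᶜ).chromaticNumber = (G.induce {x}ᶜ).cliqueNum) :
    G.chromaticNumber = G.cliqueNum := by
  classical
  have := Fintype.ofFinite V
  set n := max (G.induce {x}ᶜ).cliqueNum (G.degree x + 1)
  have hcol : G.Colorable n :=
    (chromaticNumber_le_iff_colorable.mp h.le |>.mono (le_max_left _ _)).of_induce_compl_singleton
      (Nat.lt_of_succ_le (le_max_right _ _))
  have hclosed : G.degree x + 1 ≤ G.cliqueNum := by
    have hins : G.IsClique (insert x (G.neighborFinset x) : Finset V) := by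
      simpa using hx.insert fun _ hb _ => hb
    simpa [Finset.card_insert_of_notMem, card_neighborFinset_eq_degree] using hins.card_le_cliqueNum
  have hn : n ≤ G.cliqueNum := max_le (cliqueNum_induce_le _) hclosed
  exact le_antisymm (hcol.chromaticNumber_le.trans (by exact_mod_cast hn))
    G.cliqueNum_le_chromaticNumber

end SimpleGraph

section Perfect

variable {V W : Type*} {G : SimpleGraph V} {H : SimpleGraph W}

theorem IsPerfect.of_iso (f : G ≃g H) (hG : IsPerfect G) : IsPerfect H := fun t => by
  let e : G.induce (f ⁻¹' t) ≃g H.induce t := f.induce f.bijective.bijOn_preimage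
  rw [← chromaticNumber_congr e, ← cliqueNum_congr e]
  exact hG _

theorem isPerfect_bot [Finite V] : IsPerfect (⊥ : SimpleGraph V) := fun s => by
  rw [induce_bot]
  exact chromaticNumber_bot_eq_cliqueNum

theorem isPerfect_induce_iff {A : Set V} :
    IsPerfect (G.induce A) ↔
      ∀ w ⊆ A, (G.induce w).chromaticNumber = (G.induce w).cliqueNum := by
  refine ⟨fun h w hw => ?_, fun h t => ?_⟩
  · let e := induceInduceIso G A (Subtype.val ⁻¹' w)
    have hw' : Subtype.val '' (Subtype.val ⁻¹' w : Set A) = w := by simpa using hw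
    rw [← hw', ← chromaticNumber_congr e, ← cliqueNum_congr e]
    exact h _
  · let e := induceInduceIso G A t
    rw [chromaticNumber_congr e, cliqueNum_congr e]
    exact h _ (Subtype.coe_image_subset A t)

theorem IsPerfect.induce_insert [Finite V] {A : Set V} {x : V}
    (hx : G.IsClique (G.neighborSet x)) (hA : IsPerfect (G.induce A)) :
    IsPerfect (G.induce (insert x A)) := by
  rw [isPerfect_induce_iff] at hA ⊢
  intro w hw
  by_cases hxw : x ∈ w
  · apply chromaticNumber_eq_cliqueNum_of_isClique_neighborSet (x := ⟨x, hxw⟩)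
    · exact fun a ha b hb hab => hx ha hb (Subtype.val_injective.ne hab)
    · let e := induceInduceIso G w {⟨x, hxw⟩}ᶜ
      rw [chromaticNumber_congr e, cliqueNum_congr e, Set.image_val_compl, Set.image_singleton]
      exact hA _ fun v hv => (hw hv.1).resolve_left hv.2
  · exact hA w fun v hv => (hw hv).resolve_left (ne_of_mem_of_not_mem hv hxw)

end Perfect

section GoodPartition

variable {V : Type*} {G : SimpleGraph V}

theorem GoodPartition.image_val {s : Set V} {A B : Set s}
    (h : GoodPartition (G.induce s) Set.univ A B) :
    GoodPartition G s (Subtype.val '' A) (Subtype.val '' B) := by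
  obtain ⟨hunion, hdisj, hperf, hlt⟩ := h
  refine ⟨?_, (Set.disjoint_image_iff Subtype.val_injective).mpr hdisj,
    hperf.of_iso (induceInduceIso G s A), ?_⟩
  · rw [← Set.image_union, hunion, Set.image_univ, Subtype.range_coe]
  · rwa [← cliqueNum_congr (induceInduceIso G s B),
      ← cliqueNum_congr (G.induce s).induceUnivIso]

theorem GoodPartition.insert [Finite V] {s A B : Set V} {x : V} (h : GoodPartition G s A B)
    (hxs : x ∉ s) (hx : G.IsClique (G.neighborSet x)) :
    GoodPartition G (insert x s) (insert x A) B := by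
  obtain ⟨hunion, hdisj, hperf, hlt⟩ := h
  exact ⟨by rw [Set.insert_union, hunion],
    Set.disjoint_insert_left.mpr ⟨fun hxB => hxs (hunion ▸ Or.inr hxB), hdisj⟩,
    hperf.induce_insert hx,
    hlt.trans_le (cliqueNum_mono_of_embedding (G.induceHomOfLE (Set.subset_insert x s)))⟩

/-- Without edges `G` is perfect, so `(V, ∅)` is a good partition. -/
theorem PerfectlyDivisible.exists_goodPartition_univ [Finite V] [Nonempty V]
    (hG : PerfectlyDivisible G) : ∃ A B, GoodPartition G Set.univ A B := by
  by_cases he : (G.induce Set.univ).edgeSet.Nonempty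
  · exact hG _ he
  · rw [edgeSet_nonempty, not_not] at he
    refine ⟨Set.univ, ∅, Set.union_empty _, Set.disjoint_empty _, he ▸ isPerfect_bot, ?_⟩
    rw [cliqueNum_of_isEmpty]
    exact one_le_cliqueNum

end GoodPartition

/-- No minimally non-perfectly divisible graph contains a simplicial vertex
(a vertex whose neighbourhood induces a clique). -/
theorem MNPD_no_simplicial_vertex {V : Type*} [Fintype V] (G : SimpleGraph V)
    (hmnpd : MNPD G) :
    ∀ x : V, ¬ G.IsClique (G.neighborSet x) := by
  intro x hx
  obtain ⟨hnpd, hmin⟩ := hmnpd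
  refine hnpd fun s hs => ?_
  obtain ⟨⟨a, ha⟩, ⟨b, _⟩, hab⟩ := ne_bot_iff_exists_adj.mp (edgeSet_nonempty.mp hs)
  by_cases hsu : s = Set.univ
  · subst hsu
    -- so that `{x}ᶜ` is nonempty
    have : Nontrivial V := nontrivial_of_ne a b (G.ne_of_adj hab)
    have hne : ({x}ᶜ : Set V) ≠ Set.univ := by simp
    obtain ⟨A, B, hAB⟩ := (hmin _ hne).exists_goodPartition_univ
    have hpart := hAB.image_val.insert (by simp) hx
    rw [Set.insert_eq, Set.union_compl_self] at hpart
    exact ⟨_, _, hpart⟩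
  · have : Nonempty s := ⟨⟨a, ha⟩⟩
    obtain ⟨A, B, hAB⟩ := (hmin s hsu).exists_goodPartition_univ
    exact ⟨_, _, hAB.image_val⟩
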